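/- Let M = M(Σ,I) be a free partially commutative monoid and suppose x, y ∈ Σ are two distinct letters with (x,y) ∉ I. Set Σ_0 = Σ \ {x,y}, Σ_1 = Σ \ {x}, Σ_2 = Σ \ {y}, I_j = (Σ_j×Σ_j) ∩ I, and M_j = M(Σ_j,I_j) for j = 0, 1, 2, regarded as submonoids of M. Then M, together with the inclusions of M_1 and M_2, is the free product of M_1 and M_2 amalgamated over M_0; that is, M is the pushout of the inclusions M_0 → M_1 and M_0 → M_2 in the category of monoids. -/

import Mathlib

open scoped Classical

/-- The elementary commutation relation on words: `ab ~ ba` for `(a,b) ∈ I`. -/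
def TraceRel {α : Type*} (I : α → α → Prop) : FreeMonoid α → FreeMonoid α → Prop :=
  fun u v => ∃ a b, I a b ∧ u = FreeMonoid.of a * FreeMonoid.of b ∧
    v = FreeMonoid.of b * FreeMonoid.of a

/-- The congruence on the free monoid generated by the commutation relation. -/
def TraceCon {α : Type*} (I : α → α → Prop) : Con (FreeMonoid α) := conGen (TraceRel I)

/-- The free partially commutative monoid `M(Σ, I)`: the monoid presented by
generators `Σ` and relations `ab = ba` for `(a,b) ∈ I`. -/
abbrev TraceMonoid (α : Type*) (I : α → α → Prop) : Type _ := (TraceCon I).Quotient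

/-- The canonical map `Σ* → M(Σ, I)` sending a word to its class. -/
def TraceMonoid.mk {α : Type*} (I : α → α → Prop) : FreeMonoid α →* TraceMonoid α I :=
  Con.mk' _

/-- The projection `π_A : M(Σ, I) → M(A, I_A)` erasing all letters not in `A`. -/
noncomputable def TraceMonoid.proj {α : Type*} (I : α → α → Prop) (A : Set α) :
    TraceMonoid α I →* TraceMonoid A (fun a b => I a.1 b.1) :=
  Con.lift _ ((TraceMonoid.mk _).comp (FreeMonoid.lift fun c =>
    if h : c ∈ A then FreeMonoid.of (⟨c, h⟩ : A) else 1)) <| by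
    refine Con.conGen_le.mpr ?_
    rintro u v ⟨a, b, hI, rfl, rfl⟩
    simp only [Con.ker_rel, map_mul, MonoidHom.comp_apply, FreeMonoid.lift_eval_of]
    by_cases ha : a ∈ A <;> by_cases hb : b ∈ A <;>
      simp only [ha, hb, dif_pos, dif_neg, not_false_iff, map_one, one_mul, mul_one]
    rw [← map_mul, ← map_mul]
    exact Quotient.sound (ConGen.Rel.of _ _ ⟨⟨a, ha⟩, ⟨b, hb⟩, hI, rfl, rfl⟩)

/-- The monoid homomorphism `M(A, I_A) → M(Σ, I)` induced by an inclusion `A ⊆ Σ`,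
sending the class of a word `x ∈ A*` to its class in `M(Σ, I)`. -/
def TraceMonoid.embed {σ : Type*} (I : σ → σ → Prop) (A : Set σ) :
    TraceMonoid A (fun a b => I a.1 b.1) →* TraceMonoid σ I :=
  Con.lift _ ((TraceMonoid.mk I).comp (FreeMonoid.map Subtype.val)) <| by
    refine Con.conGen_le.mpr ?_
    rintro u v ⟨a, b, hI, rfl, rfl⟩
    simp only [Con.ker_rel, MonoidHom.comp_apply, map_mul, FreeMonoid.map_of]
    rw [← map_mul, ← map_mul]
    exact Quotient.sound (ConGen.Rel.of _ _ ⟨a.1, b.1, hI, rfl, rfl⟩)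

/-- The homomorphism `M(A, I_A) → M(B, I_B)` induced by an inclusion `A ⊆ B` of
subsets of `Σ`. -/
def TraceMonoid.include {σ : Type*} (I : σ → σ → Prop) {A B : Set σ} (h : A ⊆ B) :
    TraceMonoid A (fun a b => I a.1 b.1) →* TraceMonoid B (fun a b => I a.1 b.1) :=
  Con.lift _ ((TraceMonoid.mk _).comp (FreeMonoid.map (Set.inclusion h))) <| by
    refine Con.conGen_le.mpr ?_
    rintro u v ⟨a, b, hI, rfl, rfl⟩
    simp only [Con.ker_rel, MonoidHom.comp_apply, map_mul, FreeMonoid.map_of]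
    rw [← map_mul, ← map_mul]
    exact Quotient.sound (ConGen.Rel.of _ _ ⟨_, _, hI, rfl, rfl⟩)

/- Every commutation `ab = ba` of `M` involves two letters that both avoid `x` or both
avoid `y` (since `x` and `y` do not commute), so it already holds in `M₁` or in `M₂`. Hence two
homomorphisms `g₁ : M₁ → N`, `g₂ : M₂ → N` agreeing on `M₀` glue, letter by letter, to a
homomorphism `M → N`; it is unique because `M` is generated by `Σ₁ ∪ Σ₂ = Σ`. -/

namespace TraceMonoid

variable {α : Type*} {I : α → α → Prop} {N : Type*} [Monoid N]

def of (I : α → α → Prop) (a : α) : TraceMonoid α I := mk I (FreeMonoid.of a)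

theorem hom_ext {f g : TraceMonoid α I →* N} (h : ∀ a, f (of I a) = g (of I a)) : f = g :=
  Con.hom_ext (FreeMonoid.hom_eq h)

theorem commute_of {a b : α} (h : I a b) : Commute (of I a) (of I b) :=
  Quotient.sound (ConGen.Rel.of _ _ ⟨a, b, h, rfl, rfl⟩)

def lift (f : α → N) (hf : ∀ a b, I a b → Commute (f a) (f b)) : TraceMonoid α I →* N :=
  Con.lift _ (FreeMonoid.lift f) <| Con.conGen_le.mpr <| by
    rintro _ _ ⟨a, b, hab, rfl, rfl⟩
    simpa only [Con.ker_rel, map_mul, FreeMonoid.lift_eval_of] using (hf a b hab).eq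

theorem lift_of (f : α → N) (hf : ∀ a b, I a b → Commute (f a) (f b)) (a : α) :
    lift f hf (of I a) = f a :=
  rfl

theorem embed_of (A : Set α) (a : A) : embed I A (of _ a) = of I a.1 :=
  rfl

theorem embed_comp_include {A B : Set α} (h : A ⊆ B) :
    (embed I B).comp (TraceMonoid.include I h) = embed I A :=
  hom_ext fun _ => rfl

section Amalgam

variable {S₀ S₁ S₂ : Set α} {h₀₁ : S₀ ⊆ S₁} {h₀₂ : S₀ ⊆ S₂}
  (g₁ : TraceMonoid S₁ (fun a b => I a.1 b.1) →* N)
  (g₂ : TraceMonoid S₂ (fun a b => I a.1 b.1) →* N)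

noncomputable def glue (hcover : ∀ c, c ∈ S₁ ∨ c ∈ S₂) (c : α) : N :=
  if hc : c ∈ S₁ then g₁ (of _ ⟨c, hc⟩) else g₂ (of _ ⟨c, (hcover c).resolve_left hc⟩)

theorem glue_of_mem_left (hcover : ∀ c, c ∈ S₁ ∨ c ∈ S₂) {c : α} (hc : c ∈ S₁) :
    glue g₁ g₂ hcover c = g₁ (of _ ⟨c, hc⟩) :=
  dif_pos hc

theorem glue_of_mem_right (hcover : ∀ c, c ∈ S₁ ∨ c ∈ S₂) (hinter : S₁ ∩ S₂ ⊆ S₀)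
    (hg : g₁.comp (TraceMonoid.include I h₀₁) = g₂.comp (TraceMonoid.include I h₀₂))
    {c : α} (hc : c ∈ S₂) :
    glue g₁ g₂ hcover c = g₂ (of _ ⟨c, hc⟩) := by
  by_cases hc₁ : c ∈ S₁
  · rw [glue_of_mem_left g₁ g₂ hcover hc₁]
    exact DFunLike.congr_fun hg (of _ ⟨c, hinter ⟨hc₁, hc⟩⟩)
  · exact dif_neg hc₁

theorem existsUnique_lift_of_cover (hcover : ∀ c, c ∈ S₁ ∨ c ∈ S₂) (hinter : S₁ ∩ S₂ ⊆ S₀)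
    (hcomm : ∀ a b, I a b → a ∈ S₁ ∧ b ∈ S₁ ∨ a ∈ S₂ ∧ b ∈ S₂)
    (hg : g₁.comp (TraceMonoid.include I h₀₁) = g₂.comp (TraceMonoid.include I h₀₂)) :
    ∃! h : TraceMonoid α I →* N, h.comp (embed I S₁) = g₁ ∧ h.comp (embed I S₂) = g₂ := by
  have glue₁ {c} (hc : c ∈ S₁) : glue g₁ g₂ hcover c = g₁ (of _ ⟨c, hc⟩) :=
    glue_of_mem_left g₁ g₂ hcover hc
  have glue₂ {c} (hc : c ∈ S₂) : glue g₁ g₂ hcover c = g₂ (of _ ⟨c, hc⟩) :=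
    glue_of_mem_right g₁ g₂ hcover hinter hg hc
  have hglue : ∀ a b, I a b → Commute (glue g₁ g₂ hcover a) (glue g₁ g₂ hcover b) := by
    intro a b hab
    rcases hcomm a b hab with ⟨ha, hb⟩ | ⟨ha, hb⟩
    · rw [glue₁ ha, glue₁ hb]
      exact (commute_of (I := fun a b : S₁ => I a.1 b.1) hab).map g₁
    · rw [glue₂ ha, glue₂ hb]
      exact (commute_of (I := fun a b : S₂ => I a.1 b.1) hab).map g₂
  refine ⟨lift _ hglue, ⟨hom_ext fun a => glue₁ a.2, hom_ext fun a => glue₂ a.2⟩, ?_⟩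
  rintro h ⟨h₁, h₂⟩
  refine hom_ext fun c => ?_
  rcases hcover c with hc | hc
  · rw [lift_of, glue₁ hc, ← h₁, MonoidHom.comp_apply, embed_of]
  · rw [lift_of, glue₂ hc, ← h₂, MonoidHom.comp_apply, embed_of]

end Amalgam

end TraceMonoid

/-- If `x ≠ y` are non-commuting letters, `Σ₀ = Σ \ {x,y}`, `Σ₁ = Σ \ {x}`,
`Σ₂ = Σ \ {y}`, then `M(Σ,I)`, with the inclusions of `M₁ = M(Σ₁,I₁)` and
`M₂ = M(Σ₂,I₂)`, is the free product of `M₁` and `M₂` amalgamated over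
`M₀ = M(Σ₀,I₀)`: it satisfies the universal property of the pushout of the
inclusions `M₀ → M₁` and `M₀ → M₂` in the category of monoids. -/
theorem traceMonoid_is_amalgam {σ : Type*} (I : σ → σ → Prop)
    (hsym : Symmetric I) (x y : σ) (hxy : x ≠ y) (hI : ¬ I x y) :
    letI S₀ : Set σ := ({x, y} : Set σ)ᶜ
    letI S₁ : Set σ := ({x} : Set σ)ᶜ
    letI S₂ : Set σ := ({y} : Set σ)ᶜ
    letI h₀₁ : S₀ ⊆ S₁ := Set.compl_subset_compl.mpr (by simp)
    letI h₀₂ : S₀ ⊆ S₂ := Set.compl_subset_compl.mpr (by simp)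
    (TraceMonoid.embed I S₁).comp (TraceMonoid.include I h₀₁) =
      (TraceMonoid.embed I S₂).comp (TraceMonoid.include I h₀₂) ∧
    ∀ (N : Type*) [Monoid N] (g₁ : TraceMonoid S₁ (fun a b => I a.1 b.1) →* N)
      (g₂ : TraceMonoid S₂ (fun a b => I a.1 b.1) →* N),
      g₁.comp (TraceMonoid.include I h₀₁) = g₂.comp (TraceMonoid.include I h₀₂) →
      ∃! h : TraceMonoid σ I →* N,
        h.comp (TraceMonoid.embed I S₁) = g₁ ∧ h.comp (TraceMonoid.embed I S₂) = g₂ := by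
  refine ⟨by rw [TraceMonoid.embed_comp_include, TraceMonoid.embed_comp_include],
    fun N _ g₁ g₂ hg => ?_⟩
  refine TraceMonoid.existsUnique_lift_of_cover g₁ g₂ ?cover ?inter ?comm hg
  case cover =>
    intro c
    rcases eq_or_ne c x with rfl | hc
    · simp [hxy]
    · simp [hc]
  case inter => exact fun c hc => by simp_all
  case comm =>
    intro a b hab
    by_cases hx : a = x ∨ b = x
    · have hy : a ≠ y ∧ b ≠ y := by
        rcases hx with rfl | rfl <;> constructor <;> rintro rfl <;> simp_all [hsym hab]
      simp [hy]
    · simp_all
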